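/- Let f : S¹ → S¹ be an orientation-preserving homeomorphism with rational rotation number which is not conjugate to a rotation. Then the polynomial entropy of the induced map C(f) on the hyperspace of subcontinua is at least 2. -/

import Mathlib

open Filter TopologicalSpace Set

section PolyEntropy

variable {X : Type*} [PseudoMetricSpace X]

/-- The dynamic (Bowen) metric `d_n^f(x,y) = max_{0 ≤ k < n} d(f^k x, f^k y)`. -/
noncomputable def dynDist (f : X → X) (n : ℕ) (x y : X) : ℝ :=
  ⨆ k ∈ Finset.range n, dist (f^[k] x) (f^[k] y)

/-- `E` is `(n,ε)`-separated for `f`. -/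
def IsDynSeparated (f : X → X) (n : ℕ) (ε : ℝ) (E : Set X) : Prop :=
  ∀ x ∈ E, ∀ y ∈ E, x ≠ y → ε ≤ dynDist f n x y

/-- `sep(n,ε;Y)`: maximal cardinality of an `(n,ε)`-separated subset of `Y`. -/
noncomputable def sepCount (f : X → X) (Y : Set X) (n : ℕ) (ε : ℝ) : ℕ :=
  sSup {m | ∃ E : Finset X, ↑E ⊆ Y ∧ IsDynSeparated f n ε ↑E ∧ E.card = m}

/-- `span(n,ε;Y)`: minimal number of dynamic `ε`-balls covering `Y`. -/
noncomputable def spanCount (f : X → X) (Y : Set X) (n : ℕ) (ε : ℝ) : ℕ :=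
  sInf {m | ∃ s : Finset X, s.card = m ∧ Y ⊆ ⋃ c ∈ s, {x | dynDist f n c x < ε}}

/-- `cov(n,ε;Y)`: minimal number of sets of dynamic diameter `< ε` covering `Y`. -/
noncomputable def covCount (f : X → X) (Y : Set X) (n : ℕ) (ε : ℝ) : ℕ :=
  sInf {m | ∃ 𝒰 : Finset (Set X), 𝒰.card = m ∧
      (∀ U ∈ 𝒰, ∀ x ∈ U, ∀ y ∈ U, dynDist f n x y < ε) ∧ Y ⊆ ⋃₀ ↑𝒰}

/-- Polynomial entropy of `f` on the subset `Y`: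
`lim_{ε→0} limsup_{n→∞} log sep(n,ε;Y) / log n` (the limit as `ε → 0⁺` being a
supremum over `ε > 0` by monotonicity). -/
noncomputable def hpolOn (f : X → X) (Y : Set X) : EReal :=
  ⨆ ε : {ε : ℝ // 0 < ε},
    Filter.limsup (fun n : ℕ =>
      ((Real.log (sepCount f Y n ε) / Real.log n : ℝ) : EReal)) Filter.atTop

/-- Polynomial entropy of `f`. -/
noncomputable def hpol (f : X → X) : EReal := hpolOn f Set.univ

end PolyEntropy

section Hyperspace

variable {X : Type*} [TopologicalSpace X]

/-- The hyperspace `C(X)` of subcontinua (nonempty compact connected subsets) of `X`,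
with the Hausdorff metric (inherited from `NonemptyCompacts X`). -/
def Subcontinua (X : Type*) [TopologicalSpace X] : Type _ :=
  {A : NonemptyCompacts X // IsConnected (A : Set X)}

noncomputable instance {Y : Type*} [MetricSpace Y] : MetricSpace (Subcontinua Y) :=
  Subtype.metricSpace

instance : CoeSort (Subcontinua X) (Set X) := ⟨fun A => (A.1 : Set X)⟩

/-- The induced map `C(f) : C(X) → C(X)`, `A ↦ f(A)`. -/
def inducedC (f : X → X) (hf : Continuous f) : Subcontinua X → Subcontinua X :=
  fun A => ⟨⟨⟨f '' (A.1 : Set X), A.1.isCompact.image hf⟩, A.1.nonempty.image f⟩,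
    A.2.image f hf.continuousOn⟩

/-- The induced map on the hyperspace of nonempty closed (= compact) subsets. -/
def inducedNC {Y : Type*} [TopologicalSpace Y] (f : Y → Y) (hf : Continuous f) :
    NonemptyCompacts Y → NonemptyCompacts Y :=
  fun A => ⟨⟨f '' (A : Set Y), A.isCompact.image hf⟩, A.nonempty.image f⟩

end Hyperspace

section Circle

/-- `F : ℝ → ℝ` is an (orientation-preserving) lift of `f : S¹ → S¹`. -/
def IsLiftOf (F : ℝ → ℝ) (f : UnitAddCircle → UnitAddCircle) : Prop :=
  StrictMono F ∧ (∀ x, F (x + 1) = F x + 1) ∧ ∀ x : ℝ, f (x : UnitAddCircle) = (F x : UnitAddCircle)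

/-- `f` is an orientation-preserving circle map (has an increasing degree-one lift). -/
def OrientationPreserving (f : UnitAddCircle → UnitAddCircle) : Prop :=
  ∃ F : ℝ → ℝ, IsLiftOf F f

/-- `f` has Poincaré rotation number `ρ`. -/
def HasRotationNumber (f : UnitAddCircle → UnitAddCircle) (ρ : ℝ) : Prop :=
  ∃ F : ℝ → ℝ, IsLiftOf F f ∧
    Filter.Tendsto (fun n : ℕ => F^[n] 0 / n) Filter.atTop (nhds ρ)

/-- `f` is topologically conjugate to a rotation of the circle. -/
def ConjToRotation (f : UnitAddCircle → UnitAddCircle) : Prop :=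
  ∃ (φ : UnitAddCircle ≃ₜ UnitAddCircle) (a : UnitAddCircle), ∀ x, φ (f x) = φ x + a

/-- The non-wandering set of `f`. -/
def NW {X : Type*} [TopologicalSpace X] (f : X → X) : Set X :=
  {x | ∀ U ∈ nhds x, ∃ n : ℕ, 1 ≤ n ∧ (f^[n] '' U ∩ U).Nonempty}

/-- `C` is a Cantor set: nonempty, compact, perfect and totally disconnected. -/
def IsCantorSet {X : Type*} [TopologicalSpace X] (C : Set X) : Prop :=
  C.Nonempty ∧ IsCompact C ∧ Perfect C ∧ IsTotallyDisconnected C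

/-- The closed arc starting at `x`, going counterclockwise for length `t`. -/
noncomputable def arcFrom (x : UnitAddCircle) (t : ℝ) : Set UnitAddCircle :=
  (fun s : ℝ => x + (s : UnitAddCircle)) '' Set.Icc 0 t

end Circle

/-!
Let `F` be a lift of `f` and `G = F^q - p`. The rotation number `p/q` gives `G` a fixed point,
and `G ≠ id`, since otherwise averaging `F` over a period conjugates `f` to a rotation. So there
are a fixed point `a` and a point `x₀ ∈ (a, a + 1)` moved by `G`, and the orbit `T i = G^i x₀` is
monotone inside `(a, a + 1)`; moreover `f^q` maps the arc over `[T r, T s]` onto the arc over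
`[T (r+1), T (s+1)]`. For `N < i ≤ 2N + 1` and `0 ≤ j ≤ N` the `(N + 1)^2` arcs over
`[T (-i), T (-j)]` are then `(q (2N + 1) + 1, ε)`-separated for `C(f)`: arcs with different `i`
are told apart at the time when one of them starts at `T 0`, arcs with the same `i` at the time
when one of them contains `T 1` while the other ends at `T 0`. So `sep(n, ε)` grows like `n^2`.
-/

open Function Set Filter Topology

section DynamicalDistance

variable {X : Type*} [PseudoMetricSpace X] {f : X → X} {n : ℕ} {ε : ℝ}

theorem dynDist_self (f : X → X) (n : ℕ) (x : X) : dynDist f n x x = 0 := by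
  simp [dynDist]

theorem dynDist_comm (f : X → X) (n : ℕ) (x y : X) : dynDist f n x y = dynDist f n y x := by
  simp only [dynDist, dist_comm]

theorem dynDist_le {x y : X} {C : ℝ} (hC : 0 ≤ C) (h : ∀ k < n, dist (f^[k] x) (f^[k] y) ≤ C) :
    dynDist f n x y ≤ C :=
  Real.iSup_le (fun k => Real.iSup_le (fun hk => h k (Finset.mem_range.1 hk)) hC) hC

theorem dist_iterate_le_dynDist {x y : X} {k : ℕ} (hk : k < n) :
    dist (f^[k] x) (f^[k] y) ≤ dynDist f n x y := by
  have hbdd : BddAbove (range fun j => ⨆ _ : j ∈ Finset.range n, dist (f^[j] x) (f^[j] y)) := by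
    refine ⟨∑ j ∈ Finset.range n, dist (f^[j] x) (f^[j] y), ?_⟩
    rintro _ ⟨j, rfl⟩
    exact Real.iSup_le (fun hj => Finset.single_le_sum
      (f := fun j => dist (f^[j] x) (f^[j] y)) (fun _ _ => dist_nonneg) hj)
      (Finset.sum_nonneg fun _ _ => dist_nonneg)
  calc dist (f^[k] x) (f^[k] y) = ⨆ _ : k ∈ Finset.range n, dist (f^[k] x) (f^[k] y) := by
        rw [ciSup_pos (Finset.mem_range.2 hk)]
    _ ≤ dynDist f n x y := le_ciSup hbdd k

/-- Points of a separated set have pairwise distinct itineraries through a finite `ε/3`-net. -/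
theorem bddAbove_card_isDynSeparated (hX : TotallyBounded (univ : Set X)) (f : X → X) (n : ℕ)
    (hε : 0 < ε) (Y : Set X) :
    BddAbove {m | ∃ E : Finset X, ↑E ⊆ Y ∧ IsDynSeparated f n ε ↑E ∧ E.card = m} := by
  obtain ⟨t, ht, hcover⟩ := Metric.totallyBounded_iff.1 hX (ε / 3) (by positivity)
  have : ∀ x : X, ∃ c : t, dist x c < ε / 3 := fun x => by
    obtain ⟨c, hc, hx⟩ := mem_iUnion₂.1 (hcover (mem_univ x))
    exact ⟨⟨c, hc⟩, hx⟩
  choose c hc using this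
  have := ht.to_subtype
  refine ⟨Nat.card (Fin n → t), ?_⟩
  rintro _ ⟨E, -, hE, rfl⟩
  rw [← Nat.card_eq_finsetCard]
  refine Nat.card_le_card_of_injective (fun x (k : Fin n) => c (f^[k] x)) fun x y hxy => ?_
  by_contra hne
  have hsep := hE x x.2 y y.2 (Subtype.coe_injective.ne hne)
  have hclose : dynDist f n x y ≤ ε / 3 + ε / 3 := dynDist_le (by positivity) fun k hk => by
    have hk' : c (f^[k] x) = c (f^[k] y) := congrFun hxy ⟨k, hk⟩
    calc dist (f^[k] x) (f^[k] y)
        ≤ dist (f^[k] x) (c (f^[k] x)) + dist (f^[k] y) (c (f^[k] y)) := by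
          rw [hk']; exact dist_triangle_right _ _ _
      _ ≤ ε / 3 + ε / 3 := add_le_add (hc _).le (hc _).le
  linarith

theorem card_le_sepCount {ι : Type*} (hX : TotallyBounded (univ : Set X)) (hε : 0 < ε)
    (s : Finset ι) (x : ι → X) (hx : ∀ i ∈ s, ∀ j ∈ s, i ≠ j → ε ≤ dynDist f n (x i) (x j)) :
    s.card ≤ sepCount f univ n ε := by
  classical
  have hinj : InjOn x s := fun i hi j hj hij => by
    by_contra hne
    have := hx i hi j hj hne
    rw [hij, dynDist_self] at this
    linarith
  refine le_csSup (bddAbove_card_isDynSeparated hX f n hε univ)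
    ⟨s.image x, subset_univ _, ?_, Finset.card_image_of_injOn hinj⟩
  rintro _ hy _ hz hyz
  obtain ⟨i, hi, rfl⟩ := Finset.mem_image.1 hy
  obtain ⟨j, hj, rfl⟩ := Finset.mem_image.1 hz
  exact hx i hi j hj (ne_of_apply_ne x hyz)

theorem le_hpolOn_of_pow_le_sepCount {Y : Set X} (hε : 0 < ε) {d : ℕ} {φ : ℕ → ℕ}
    (hφ : Tendsto φ atTop atTop) {C : ℝ} (hφC : ∀ N, (φ N : ℝ) ≤ C * (N + 1))
    (hsep : ∀ N, (N + 1) ^ d ≤ sepCount f Y (φ N) ε) : (d : EReal) ≤ hpolOn f Y := by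
  set u : ℕ → EReal := fun n => ((Real.log (sepCount f Y n ε) / Real.log n : ℝ) : EReal)
  set v : ℕ → ℝ := fun N => d / (1 + Real.log C / Real.log (N + 1))
  have hlogN : Tendsto (fun N : ℕ => Real.log (N + 1)) atTop atTop :=
    Real.tendsto_log_atTop.comp (tendsto_atTop_add_const_right _ 1 tendsto_natCast_atTop_atTop)
  have hv : Tendsto v atTop (𝓝 d) := by
    have := (tendsto_const_nhds (x := (d : ℝ))).div (tendsto_const_nhds.add
      ((tendsto_const_nhds (x := Real.log C)).div_atTop hlogN)) (by norm_num : (1 : ℝ) + 0 ≠ 0)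
    rwa [add_zero, div_one] at this
  have hvu : ∀ᶠ N in atTop, (v N : EReal) ≤ u (φ N) := by
    filter_upwards [hφ.eventually_ge_atTop 2, eventually_ge_atTop 1] with N hφN hN
    have hN1 : 0 < Real.log (N + 1) := Real.log_pos (by norm_cast; omega)
    have hφpos : 0 < Real.log (φ N) := Real.log_pos (by norm_cast)
    have hC : 0 < C := by
      have := hφC N
      have : (2 : ℝ) ≤ φ N := by exact_mod_cast hφN
      nlinarith
    have hφle : Real.log (φ N) ≤ Real.log C + Real.log (N + 1) := by
      rw [← Real.log_mul hC.ne' (by positivity)]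
      exact Real.log_le_log (by positivity) (hφC N)
    have hsepN : d * Real.log (N + 1) ≤ Real.log (sepCount f Y (φ N) ε) := by
      rw [← Real.log_pow]
      exact Real.log_le_log (by positivity) (by exact_mod_cast hsep N)
    rw [EReal.coe_le_coe_iff]
    calc v N = d * Real.log (N + 1) / (Real.log C + Real.log (N + 1)) := by
          simp only [v]; field_simp; ring
      _ ≤ d * Real.log (N + 1) / Real.log (φ N) :=
          div_le_div_of_nonneg_left (by positivity) hφpos hφle
      _ ≤ Real.log (sepCount f Y (φ N) ε) / Real.log (φ N) :=
          div_le_div_of_nonneg_right hsepN hφpos.le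
  calc (d : EReal) = liminf (fun N => (v N : EReal)) atTop :=
        (((continuous_coe_real_ereal.tendsto _).comp hv).liminf_eq).symm
    _ ≤ liminf (u ∘ φ) atTop := liminf_le_liminf hvu
    _ ≤ limsup (u ∘ φ) atTop := liminf_le_limsup
    _ ≤ limsup u atTop := by rw [limsup_comp]; exact limsup_le_limsup_of_le hφ
    _ ≤ hpolOn f Y := le_iSup (fun δ : {δ : ℝ // 0 < δ} => limsup (fun n : ℕ =>
          ((Real.log (sepCount f Y n δ) / Real.log n : ℝ) : EReal)) atTop) ⟨ε, hε⟩

end DynamicalDistance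

section OrderIsoOrbit

variable {α : Type*} [LinearOrder α] (e : α ≃o α)

theorem OrderIso.coe_pow (n : ℕ) : ⇑(e ^ n) = (⇑e)^[n] := by
  induction n with
  | zero => rfl
  | succ n ih => rw [pow_succ, RelIso.coe_mul, ih, iterate_succ]

theorem OrderIso.image_uIcc (a b : α) : e '' uIcc a b = uIcc (e a) (e b) := by
  rw [uIcc, e.image_Icc, e.map_inf, e.map_sup, uIcc]

theorem OrderIso.zpow_apply_eq_self {a : α} (ha : e a = a) (i : ℤ) : (e ^ i) a = a := by
  induction i using Int.induction_on with
  | zero => rfl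
  | succ k ih => rw [zpow_add_one, RelIso.mul_apply, ha, ih]
  | pred k ih => rw [zpow_sub_one, RelIso.mul_apply,
    show e⁻¹ a = a from e.symm_apply_eq.2 ha.symm, ih]

theorem OrderIso.zpow_apply_mem_Ioo {a b x : α} (ha : e a = a) (hb : e b = b) (hx : x ∈ Ioo a b)
    (i : ℤ) : (e ^ i) x ∈ Ioo a b := by
  have h := (e ^ i).strictMono
  exact ⟨e.zpow_apply_eq_self ha i ▸ h hx.1, e.zpow_apply_eq_self hb i ▸ h hx.2⟩

theorem OrderIso.monotone_or_antitone_zpow_apply (x : α) :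
    Monotone (fun i : ℤ => (e ^ i) x) ∨ Antitone (fun i : ℤ => (e ^ i) x) := by
  have hstep : ∀ i : ℤ, (e ^ (i + 1)) x = (e ^ i) (e x) := fun i => by
    rw [zpow_add_one, RelIso.mul_apply]
  rcases le_total x (e x) with h | h
  · exact .inl <| monotone_int_of_le_succ fun i => (hstep i).symm ▸ (e ^ i).monotone h
  · exact .inr <| antitone_int_of_succ_le fun i => (hstep i).symm ▸ (e ^ i).monotone h

end OrderIsoOrbit

theorem UnitAddCircle.coe_eq_coe_iff {x y : ℝ} :
    (x : UnitAddCircle) = y ↔ ∃ m : ℤ, x = y + m := by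
  rw [QuotientAddGroup.eq_iff_sub_mem, AddSubgroup.mem_zmultiples_iff]
  simp only [zsmul_eq_mul, mul_one]
  exact ⟨fun ⟨m, hm⟩ => ⟨m, by linarith⟩, fun ⟨m, hm⟩ => ⟨m, by linarith⟩⟩

def CircleDeg1Lift.circleMap (H : CircleDeg1Lift) : UnitAddCircle → UnitAddCircle :=
  Quotient.map' H fun x y hxy => by
    rw [QuotientAddGroup.leftRel_apply, AddSubgroup.mem_zmultiples_iff] at hxy ⊢
    obtain ⟨m, hm⟩ := hxy
    refine ⟨m, ?_⟩
    rw [show y = x + m by simp at hm; linarith, H.map_add_int]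
    simp

theorem CircleDeg1Lift.circleMap_coe (H : CircleDeg1Lift) (x : ℝ) :
    H.circleMap x = (H x : UnitAddCircle) :=
  rfl

theorem CircleDeg1Lift.continuous_circleMap {H : CircleDeg1Lift} (hc : Continuous H) :
    Continuous H.circleMap :=
  hc.quotient_map' _

theorem UnitAddCircle.exists_homeomorph_of_lift {H : ℝ → ℝ} (hH : StrictMono H) (hc : Continuous H)
    (h1 : ∀ x, H (x + 1) = H x + 1) :
    ∃ h : UnitAddCircle ≃ₜ UnitAddCircle, ∀ x : ℝ, h x = (H x : UnitAddCircle) := by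
  let L : CircleDeg1Lift := ⟨⟨H, hH.monotone⟩, h1⟩
  obtain ⟨u, hu⟩ := CircleDeg1Lift.isUnit_iff_bijective.2
    ⟨hH.injective, L.continuous_iff_surjective.1 hc⟩
  have hinv : Continuous (u⁻¹ : CircleDeg1Liftˣ) := (CircleDeg1Lift.toOrderIso u).symm.continuous
  refine ⟨⟨⟨L.circleMap, (u⁻¹ : CircleDeg1Liftˣ).1.circleMap, fun z => ?_, fun z => ?_⟩,
    CircleDeg1Lift.continuous_circleMap (H := L) hc,
    CircleDeg1Lift.continuous_circleMap hinv⟩, fun x => rfl⟩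
  all_goals
    induction z using QuotientAddGroup.induction_on with
    | H x => simp [CircleDeg1Lift.circleMap_coe, ← hu]

namespace IsLiftOf

variable {F : ℝ → ℝ} {f : UnitAddCircle → UnitAddCircle}

theorem semiconj (hF : IsLiftOf F f) : Semiconj ((↑) : ℝ → UnitAddCircle) F f :=
  fun x => (hF.2.2 x).symm

def toCircleDeg1Lift (hF : IsLiftOf F f) : CircleDeg1Lift :=
  ⟨⟨F, hF.1.monotone⟩, hF.2.1⟩

theorem coe_toCircleDeg1Lift_pow (hF : IsLiftOf F f) (n : ℕ) :
    ⇑(hF.toCircleDeg1Lift ^ n) = F^[n] :=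
  CircleDeg1Lift.coe_pow _ n

theorem iterate_add_int (hF : IsLiftOf F f) (n : ℕ) (x : ℝ) (m : ℤ) :
    F^[n] (x + m) = F^[n] x + m := by
  simpa only [coe_toCircleDeg1Lift_pow] using (hF.toCircleDeg1Lift ^ n).map_add_int x m

theorem surjective (hF : IsLiftOf F f) (hf : Surjective f) : Surjective F := fun y => by
  obtain ⟨z, hz⟩ := hf (y : UnitAddCircle)
  obtain ⟨x, rfl⟩ := QuotientAddGroup.mk_surjective z
  obtain ⟨m, hm⟩ := UnitAddCircle.coe_eq_coe_iff.1 ((hF.2.2 x).symm.trans hz)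
  refine ⟨x + (-m : ℤ), ?_⟩
  simpa [hm] using hF.iterate_add_int 1 x (-m)

theorem continuous (hF : IsLiftOf F f) (hf : Surjective f) : Continuous F :=
  hF.toCircleDeg1Lift.continuous_iff_surjective.2 (hF.surjective hf)

theorem exists_iterate_eq_add (hF : IsLiftOf F f) (hf : Surjective f) {p : ℤ} {q : ℕ}
    (hq : 0 < q) (hρ : Tendsto (fun n : ℕ => F^[n] 0 / n) atTop (𝓝 ((p : ℝ) / q))) :
    ∃ c, F^[q] c = c + p := by
  have hτ : hF.toCircleDeg1Lift.translationNumber = p / q := by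
    refine tendsto_nhds_unique ?_ hρ
    simpa only [coe_toCircleDeg1Lift_pow] using hF.toCircleDeg1Lift.tendsto_translation_number₀
  simpa only [coe_toCircleDeg1Lift_pow] using
    (hF.toCircleDeg1Lift.translationNumber_eq_rat_iff (hF.continuous hf) hq).1 hτ

/-- The average `H = (1/q) ∑_{k<q} (F^k - k p/q)` satisfies `H ∘ F = H + p/q`, so it descends to
a conjugacy of `f` with the rotation by `p/q`. -/
theorem conjToRotation (hF : IsLiftOf F f) (hc : Continuous F) {p : ℤ} {q : ℕ} (hq : 0 < q)
    (hper : ∀ x, F^[q] x = x + p) : ConjToRotation f := by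
  set ρ : ℝ := p / q
  set H : ℝ → ℝ := fun x => (∑ k ∈ Finset.range q, (F^[k] x - k * ρ)) / q with hH
  have hq' : (0 : ℝ) < q := by exact_mod_cast hq
  have hHmono : StrictMono H := fun x y hxy => by
    refine div_lt_div_of_pos_right (Finset.sum_lt_sum_of_nonempty ⟨0, Finset.mem_range.2 hq⟩
      fun k _ => ?_) hq'
    linarith [hF.1.iterate k hxy]
  have hH1 : ∀ x, H (x + 1) = H x + 1 := fun x => by
    have := fun k => hF.iterate_add_int k x 1
    push_cast at this
    simp only [hH, this, add_sub_right_comm _ (1 : ℝ), Finset.sum_add_distrib, Finset.sum_const,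
      Finset.card_range, nsmul_eq_mul, mul_one, add_div, div_self hq'.ne']
  have hHF : ∀ x, H (F x) = H x + ρ := fun x => by
    have key : ∑ k ∈ Finset.range q, (F^[k] (F x) - k * ρ)
        - ∑ k ∈ Finset.range q, (F^[k] x - k * ρ) = p := by
      rw [← Finset.sum_sub_distrib]
      simp only [← iterate_succ_apply, sub_sub_sub_cancel_right]
      rw [Finset.sum_range_sub (fun k => F^[k] x), hper, iterate_zero_apply, add_sub_cancel_left]
    rw [show H x + ρ = (∑ k ∈ Finset.range q, (F^[k] x - k * ρ) + p) / q from
      (add_div _ _ _).symm, ← key, add_sub_cancel]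
  have hHc : Continuous H := by
    simp only [hH]
    fun_prop
  obtain ⟨h, hh⟩ := UnitAddCircle.exists_homeomorph_of_lift hHmono hHc hH1
  refine ⟨h, ρ, fun z => ?_⟩
  induction z using QuotientAddGroup.induction_on with
  | H x => rw [hF.2.2, hh, hh, hHF, AddCircle.coe_add]

end IsLiftOf

theorem Metric.le_hausdorffDist_of_mem {Y : Type*} [PseudoMetricSpace Y] {s t : Set Y} {z : Y}
    {ε : ℝ} (hz : z ∈ s) (hs : Bornology.IsBounded s) (ht : Bornology.IsBounded t)
    (htne : t.Nonempty) (h : ∀ w ∈ t, ε ≤ dist z w) : ε ≤ hausdorffDist s t :=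
  ((le_infDist htne).2 h).trans <| infDist_le_hausdorffDist_of_mem hz <|
    hausdorffEDist_ne_top_of_nonempty_of_bounded ⟨z, hz⟩ htne hs ht

theorem Subcontinua.dist_eq {Y : Type*} [MetricSpace Y] (A B : Subcontinua Y) :
    dist A B = Metric.hausdorffDist (A.1 : Set Y) B.1 :=
  Metric.NonemptyCompacts.dist_eq

theorem Subcontinua.totallyBounded_univ (Y : Type*) [MetricSpace Y] [CompactSpace Y] :
    TotallyBounded (univ : Set (Subcontinua Y)) :=
  totallyBounded_preimage isUniformEmbedding_subtype_val.isUniformInducing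
    isCompact_univ.totallyBounded

theorem iterate_inducedC_coe {X : Type*} [TopologicalSpace X] (f : X → X) (hf : Continuous f)
    (m : ℕ) (A : Subcontinua X) : (((inducedC f hf)^[m] A).1 : Set X) = f^[m] '' A.1 := by
  induction m with
  | zero => simp
  | succ m ih =>
    rw [iterate_succ_apply', iterate_succ', image_comp, ← ih]
    rfl

def circleArc (u v : ℝ) : Subcontinua UnitAddCircle :=
  ⟨⟨⟨(↑) '' uIcc u v, isCompact_uIcc.image (AddCircle.continuous_mk' 1)⟩, nonempty_uIcc.image _⟩,
    ⟨nonempty_uIcc.image _, isPreconnected_uIcc.image _ (AddCircle.continuous_mk' 1).continuousOn⟩⟩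

theorem coe_circleArc (u v : ℝ) :
    ((circleArc u v).1 : Set UnitAddCircle) = (↑) '' uIcc u v :=
  rfl

theorem le_dist_circleArc {u v u' v' z ε : ℝ} (hz : z ∈ uIcc u v)
    (h : ∀ t ∈ uIcc u' v', ε ≤ dist (z : UnitAddCircle) t) :
    ε ≤ dist (circleArc u v) (circleArc u' v') := by
  rw [Subcontinua.dist_eq]
  exact Metric.le_hausdorffDist_of_mem (mem_image_of_mem _ hz)
    (circleArc u v).1.isCompact.isBounded (circleArc u' v').1.isCompact.isBounded
    (circleArc u' v').1.nonempty (forall_mem_image.2 h)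

theorem iterate_inducedC_circleArc {g : UnitAddCircle → UnitAddCircle} (hg : Continuous g)
    {q : ℕ} {e : ℝ ≃o ℝ} (hge : ∀ x : ℝ, g^[q] x = e x) (m : ℕ) (u v : ℝ) :
    (inducedC g hg)^[q * m] (circleArc u v) = circleArc ((e ^ m) u) ((e ^ m) v) := by
  have hs : Semiconj ((↑) : ℝ → UnitAddCircle) e (g^[q]) := fun x => (hge x).symm
  refine Subtype.ext (NonemptyCompacts.ext ?_)
  change ((inducedC g hg)^[q * m] (circleArc u v)).1 = ((circleArc _ _).1 : Set UnitAddCircle)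
  rw [iterate_inducedC_coe, coe_circleArc, coe_circleArc, iterate_mul, ← image_comp,
    ← (hs.iterate_right m).comp_eq, image_comp, ← OrderIso.coe_pow, OrderIso.image_uIcc]

theorem min_le_dist_coe_of_mem_Ioo {a x t δ : ℝ} (hx : x ∈ Ioo a (a + 1))
    (ht : t ∈ Ioo a (a + 1)) (hδ : δ ≤ |x - t|) :
    min δ (min (x - a) (a + 1 - x)) ≤ dist (x : UnitAddCircle) t := by
  rw [dist_eq_norm, ← AddCircle.coe_sub, UnitAddCircle.norm_eq]
  obtain ⟨hx₁, hx₂⟩ := hx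
  obtain ⟨ht₁, ht₂⟩ := ht
  rcases lt_trichotomy (round (x - t)) 0 with h | h | h
  · have : (round (x - t) : ℝ) ≤ -1 := by exact_mod_cast Int.le_sub_one_iff.2 h
    refine (min_le_right _ _).trans ((min_le_left _ _).trans ?_)
    rw [abs_of_pos (by linarith)]
    linarith
  · rw [h, Int.cast_zero, sub_zero]
    exact (min_le_left _ _).trans hδ
  · have : (1 : ℝ) ≤ round (x - t) := by exact_mod_cast h
    refine (min_le_right _ _).trans ((min_le_right _ _).trans ?_)
    rw [abs_of_neg (by linarith)]
    linarith

theorem abs_sub_le_abs_sub_of_mem_uIcc {x y u v t : ℝ} (hu : y ∈ uIcc x u) (hv : y ∈ uIcc x v)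
    (ht : t ∈ uIcc u v) : |x - y| ≤ |x - t| := by
  have hy : y ∈ uIcc x t := by
    rw [mem_uIcc] at *
    rcases le_total x t with h | h
    · left
      constructor <;> rcases hu with ⟨_, _⟩ | ⟨_, _⟩ <;> rcases hv with ⟨_, _⟩ | ⟨_, _⟩ <;>
        rcases ht with ⟨_, _⟩ | ⟨_, _⟩ <;> linarith
    · right
      constructor <;> rcases hu with ⟨_, _⟩ | ⟨_, _⟩ <;> rcases hv with ⟨_, _⟩ | ⟨_, _⟩ <;>
        rcases ht with ⟨_, _⟩ | ⟨_, _⟩ <;> linarith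
  simpa only [abs_sub_comm] using abs_sub_left_of_mem_uIcc hy

section ArcSeparation

variable {g : UnitAddCircle → UnitAddCircle} {q : ℕ} {T : ℤ → ℝ} {ε : ℝ}

theorem exists_pos_forall_le_dist_coe {a : ℝ} (hT : Monotone T ∨ Antitone T)
    (hTI : ∀ i, T i ∈ Ioo a (a + 1)) (h01 : T 0 ≠ T 1) :
    ∃ ε > 0,
      (∀ r s : ℤ, 1 ≤ r → 1 ≤ s → ∀ t ∈ uIcc (T r) (T s), ε ≤ dist (T 0 : UnitAddCircle) t) ∧
      (∀ r s : ℤ, r ≤ 0 → s ≤ 0 → ∀ t ∈ uIcc (T r) (T s), ε ≤ dist (T 1 : UnitAddCircle) t) := by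
  have far : ∀ c c' r s : ℤ, c' ∈ uIcc c r → c' ∈ uIcc c s → ∀ t ∈ uIcc (T r) (T s),
      min |T c - T c'| (min (T c - a) (a + 1 - T c)) ≤ dist (T c : UnitAddCircle) t := by
    -- `T c'` separates `T c` from the arc
    intro c c' r s hr hs t ht
    have between := monotone_or_antitone_iff_uIcc.1 hT
    exact min_le_dist_coe_of_mem_Ioo (hTI c) (ordConnected_Ioo.uIcc_subset (hTI r) (hTI s) ht)
      (abs_sub_le_abs_sub_of_mem_uIcc (between _ _ _ hr) (between _ _ _ hs) ht)
  have h01' : 0 < |T 0 - T 1| := abs_pos.2 (sub_ne_zero.2 h01)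
  refine ⟨min (min |T 0 - T 1| (min (T 0 - a) (a + 1 - T 0)))
      (min |T 1 - T 0| (min (T 1 - a) (a + 1 - T 1))), ?_, ?_, ?_⟩
  · rw [abs_sub_comm (T 1)]
    have := hTI 0
    have := hTI 1
    simp only [mem_Ioo] at *
    exact lt_min (lt_min h01' (lt_min (by linarith) (by linarith)))
      (lt_min h01' (lt_min (by linarith) (by linarith)))
  · exact fun r s hr hs t ht => (min_le_left _ _).trans
      (far 0 1 r s (mem_uIcc_of_le zero_le_one hr) (mem_uIcc_of_le zero_le_one hs) t ht)
  · exact fun r s hr hs t ht => (min_le_right _ _).trans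
      (far 1 0 r s (mem_uIcc_of_ge hr zero_le_one) (mem_uIcc_of_ge hs zero_le_one) t ht)

variable (hg : Continuous g)

theorem le_dynDist_circleArc_of_lt_left
    (hshift : ∀ (m : ℕ) (r s : ℤ),
      (inducedC g hg)^[q * m] (circleArc (T r) (T s)) = circleArc (T (r + m)) (T (s + m)))
    (hfar : ∀ r s : ℤ, 1 ≤ r → 1 ≤ s → ∀ t ∈ uIcc (T r) (T s), ε ≤ dist (T 0 : UnitAddCircle) t)
    {n i j k l : ℕ} (hi : q * i < n) (hki : k < i) (hli : l < i) :
    ε ≤ dynDist (inducedC g hg) n (circleArc (T (-i)) (T (-j))) (circleArc (T (-k)) (T (-l))) := by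
  -- at time `q i` the first arc starts at `T 0` and the second one lies beyond `T 1`
  refine le_trans ?_ (dist_iterate_le_dynDist hi)
  rw [hshift, hshift, neg_add_cancel]
  exact le_dist_circleArc left_mem_uIcc (hfar _ _ (by omega) (by omega))

theorem le_dynDist_circleArc_of_lt_right (hT : Monotone T ∨ Antitone T)
    (hshift : ∀ (m : ℕ) (r s : ℤ),
      (inducedC g hg)^[q * m] (circleArc (T r) (T s)) = circleArc (T (r + m)) (T (s + m)))
    (hfar : ∀ r s : ℤ, r ≤ 0 → s ≤ 0 → ∀ t ∈ uIcc (T r) (T s), ε ≤ dist (T 1 : UnitAddCircle) t)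
    {n i j l : ℕ} (hl : q * l < n) (hjl : j < l) (hli : l < i) :
    ε ≤ dynDist (inducedC g hg) n (circleArc (T (-i)) (T (-j))) (circleArc (T (-i)) (T (-l))) := by
  -- at time `q l` the first arc contains `T 1` and the second one ends at `T 0`
  refine le_trans ?_ (dist_iterate_le_dynDist hl)
  rw [hshift, hshift, neg_add_cancel]
  exact le_dist_circleArc (monotone_or_antitone_iff_uIcc.1 hT _ _ 1
    (mem_uIcc_of_le (by omega) (by omega))) (hfar _ _ (by omega) le_rfl)

theorem sq_le_sepCount_circleArc (hT : Monotone T ∨ Antitone T)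
    (hshift : ∀ (m : ℕ) (r s : ℤ),
      (inducedC g hg)^[q * m] (circleArc (T r) (T s)) = circleArc (T (r + m)) (T (s + m)))
    (hfar₀ : ∀ r s : ℤ, 1 ≤ r → 1 ≤ s → ∀ t ∈ uIcc (T r) (T s), ε ≤ dist (T 0 : UnitAddCircle) t)
    (hfar₁ : ∀ r s : ℤ, r ≤ 0 → s ≤ 0 → ∀ t ∈ uIcc (T r) (T s), ε ≤ dist (T 1 : UnitAddCircle) t)
    (hε : 0 < ε) (N : ℕ) :
    (N + 1) ^ 2 ≤ sepCount (inducedC g hg) univ (q * (2 * N + 1) + 1) ε := by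
  have time : ∀ m ≤ 2 * N + 1, q * m < q * (2 * N + 1) + 1 := fun m hm =>
    Nat.lt_succ_of_le (Nat.mul_le_mul_left q hm)
  have hcard : (Finset.Ioc N (2 * N + 1) ×ˢ Finset.range (N + 1)).card = (N + 1) ^ 2 := by
    rw [Finset.card_product, Nat.card_Ioc, Finset.card_range, sq]
    congr 1
    omega
  rw [← hcard]
  refine card_le_sepCount (Subcontinua.totallyBounded_univ _) hε _
    (fun ij => circleArc (T (-ij.1)) (T (-ij.2))) ?_
  rintro ⟨i, j⟩ hij ⟨k, l⟩ hkl hne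
  simp only [Finset.mem_product, Finset.mem_Ioc, Finset.mem_range] at hij hkl
  rcases lt_trichotomy k i with h | rfl | h
  · exact le_dynDist_circleArc_of_lt_left hg hshift hfar₀ (time i hij.1.2) h (by omega)
  · rcases lt_or_gt_of_ne (fun hjl : j = l => hne (hjl ▸ rfl)) with h | h
    · exact le_dynDist_circleArc_of_lt_right hg hT hshift hfar₁ (time l (by omega)) h (by omega)
    · rw [dynDist_comm]
      exact le_dynDist_circleArc_of_lt_right hg hT hshift hfar₁ (time j (by omega)) h (by omega)
  · rw [dynDist_comm]
    exact le_dynDist_circleArc_of_lt_left hg hshift hfar₀ (time k hkl.1.2) h (by omega)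

theorem exists_sq_le_sepCount_of_orderIso {e : ℝ ≃o ℝ} (hge : ∀ x : ℝ, g^[q] x = e x)
    {a x₀ : ℝ} (ha : e a = a) (ha₁ : e (a + 1) = a + 1) (hx₀ : x₀ ∈ Ioo a (a + 1))
    (hmove : e x₀ ≠ x₀) :
    ∃ ε > 0, ∀ N : ℕ, (N + 1) ^ 2 ≤ sepCount (inducedC g hg) univ (q * (2 * N + 1) + 1) ε := by
  have hT := e.monotone_or_antitone_zpow_apply x₀
  have hshift : ∀ (m : ℕ) (r s : ℤ), (inducedC g hg)^[q * m] (circleArc ((e ^ r) x₀) ((e ^ s) x₀))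
      = circleArc ((e ^ (r + m)) x₀) ((e ^ (s + m)) x₀) := fun m r s => by
    rw [iterate_inducedC_circleArc hg hge, ← zpow_natCast, ← RelIso.mul_apply, ← RelIso.mul_apply,
      ← zpow_add, ← zpow_add, add_comm (m : ℤ), add_comm (m : ℤ)]
  obtain ⟨ε, hε, hfar₀, hfar₁⟩ := exists_pos_forall_le_dist_coe hT (e.zpow_apply_mem_Ioo ha ha₁ hx₀)
    (by simpa using hmove.symm)
  exact ⟨ε, hε, sq_le_sepCount_circleArc hg hT hshift hfar₀ hfar₁ hε⟩

end ArcSeparation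

theorem IsLiftOf.exists_sq_le_sepCount {F : ℝ → ℝ} {f : UnitAddCircle → UnitAddCircle}
    (hF : IsLiftOf F f) (hf : Continuous f) (hFs : Surjective F) {p : ℤ} {q : ℕ} {c x₀ : ℝ}
    (hc : F^[q] c = c + p) (hx₀ : F^[q] x₀ ≠ x₀ + p) :
    ∃ ε > 0, ∀ N : ℕ, (N + 1) ^ 2 ≤ sepCount (inducedC f hf) univ (q * (2 * N + 1) + 1) ε := by
  set G : ℝ → ℝ := fun x => F^[q] x - p
  have hGmono : StrictMono G := fun x y h => sub_lt_sub_right (hF.1.iterate q h) _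
  have hGs : Surjective G := fun y => by
    obtain ⟨x, hx⟩ := hFs.iterate q (y + p)
    exact ⟨x, by simp [G, hx]⟩
  set e := StrictMono.orderIsoOfSurjective G hGmono hGs
  have hG : ∀ (x : ℝ) (m : ℤ), e (x + m) = e x + m := fun x m => by
    simp only [e, StrictMono.coe_orderIsoOfSurjective, G, hF.iterate_add_int]
    ring
  -- `a` and `a + 1` are fixed points of `e` with `a < x₀ < a + 1`
  set a := c + ⌊x₀ - c⌋
  have ha : e a = a := by
    simp only [a, hG]
    simp [e, G, hc]
  have hge : ∀ x : ℝ, f^[q] x = e x := fun x => by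
    rw [← (hF.semiconj.iterate_right q) x, UnitAddCircle.coe_eq_coe_iff]
    exact ⟨p, by simp [e, G]⟩
  have hx₀a : x₀ ∈ Ioo a (a + 1) := by
    refine ⟨lt_of_le_of_ne (by linarith [Int.floor_le (x₀ - c)]) fun h => hx₀ ?_, ?_⟩
    · have := ha
      rw [h] at this
      simp only [e, StrictMono.coe_orderIsoOfSurjective, G] at this
      linarith
    · linarith [Int.lt_floor_add_one (x₀ - c)]
  refine exists_sq_le_sepCount_of_orderIso hf hge ha (by simpa [ha] using hG a 1) hx₀a
    fun h => hx₀ ?_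
  simp only [e, StrictMono.coe_orderIsoOfSurjective, G] at h
  linarith

/-- an orientation-preserving circle homeomorphism with rational
rotation number, not conjugate to a rotation, has `h_pol(C(f)) ≥ 2`. -/
theorem stmt_11 (f : UnitAddCircle ≃ₜ UnitAddCircle) (p : ℤ) (q : ℕ) (hq : 0 < q)
    (hρ : HasRotationNumber (f : UnitAddCircle → UnitAddCircle) ((p : ℝ) / q))
    (hnot : ¬ ConjToRotation (f : UnitAddCircle → UnitAddCircle)) :
    2 ≤ hpol (inducedC (f : UnitAddCircle → UnitAddCircle) f.continuous) := by
  obtain ⟨F, hF, hρF⟩ := hρ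
  obtain ⟨c, hc⟩ := hF.exists_iterate_eq_add f.surjective hq hρF
  obtain ⟨x₀, hx₀⟩ : ∃ x₀, F^[q] x₀ ≠ x₀ + p := by
    by_contra! h
    exact hnot (hF.conjToRotation (hF.continuous f.surjective) hq h)
  obtain ⟨ε, hε, hsep⟩ := hF.exists_sq_le_sepCount f.continuous (hF.surjective f.surjective) hc hx₀
  have hφ : Tendsto (fun N : ℕ => q * (2 * N + 1) + 1) atTop atTop :=
    tendsto_atTop_mono (fun N => show N ≤ q * (2 * N + 1) + 1 by nlinarith) tendsto_id
  have hφC : ∀ N : ℕ, ((q * (2 * N + 1) + 1 : ℕ) : ℝ) ≤ 3 * q * (N + 1) := fun N => by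
    have : (1 : ℝ) ≤ q := by exact_mod_cast hq
    push_cast
    nlinarith
  exact_mod_cast le_hpolOn_of_pow_le_sepCount hε hφ hφC hsep
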